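/- arXiv:2004.02875 — 16 statements merged into one kernel-verified Lean document; each statement's English description precedes it below -/
import Mathlib

section
/- Let R be a commutative ring, S a multiplicatively closed subset of R, M an R-module, and N a submodule of M with (N :_R M) ∩ S = ∅. Then N is an S-2-absorbing submodule of M if and only if there exists a fixed s ∈ S such that for every a, b ∈ R, either (N :_M s²ab) = (N :_M s²a) or (N :_M s²ab) = (N :_M s²b) or (N :_M s³ab) = M. -/
open Pointwise

/-- `S` is a multiplicatively closed subset of `R`: `0 ∉ S`, `1 ∈ S`, closed under products. -/
def IsMCS {R : Type*} [CommRing R] (S : Set R) : Prop :=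
  (0 : R) ∉ S ∧ (1 : R) ∈ S ∧ ∀ s ∈ S, ∀ t ∈ S, s * t ∈ S

/-- `N` is an `S`-2-absorbing submodule of `M`. -/
def IsS2AbsorbingSubmodule {R M : Type*} [CommRing R] [AddCommGroup M] [Module R M]
    (S : Set R) (N : Submodule R M) : Prop :=
  (∀ s ∈ S, s ∉ N.colon ⊤) ∧
  ∃ s ∈ S, ∀ a b : R, ∀ m : M, (a * b) • m ∈ N →
    s * (a * b) ∈ N.colon ⊤ ∨ (s * a) • m ∈ N ∨ (s * b) • m ∈ N

/-- `I` is an `S`-2-absorbing ideal of `R`. -/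
def IsS2AbsorbingIdeal {R : Type*} [CommRing R] (S : Set R) (I : Ideal R) : Prop :=
  (∀ s ∈ S, s ∉ I) ∧
  ∃ s ∈ S, ∀ a b c : R, a * b * c ∈ I →
    s * (a * b) ∈ I ∨ s * (a * c) ∈ I ∨ s * (b * c) ∈ I

/-- `N` is an `S`-2-absorbing second submodule of `M`. -/
def IsS2AbsorbingSecond {R M : Type*} [CommRing R] [AddCommGroup M] [Module R M]
    (S : Set R) (N : Submodule R M) : Prop :=
  (∀ s ∈ S, s ∉ N.annihilator) ∧
  ∃ s ∈ S, ∀ a b : R, ∀ K : Submodule R M, (a * b) • N ≤ K →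
    (s * a) • N ≤ K ∨ (s * b) • N ≤ K ∨ (s * (a * b)) • N = ⊥

/-- `N` is an `S`-second submodule of `M`. -/
def IsSSecond {R M : Type*} [CommRing R] [AddCommGroup M] [Module R M]
    (S : Set R) (N : Submodule R M) : Prop :=
  (∀ s ∈ S, s ∉ N.annihilator) ∧
  ∃ s ∈ S, ∀ r : R, ∀ K : Submodule R M, r • N ≤ K →
    (r * s) • N = ⊥ ∨ s • N ≤ K

/-- `N` is a strongly 2-absorbing second submodule of `M`. -/
def IsStrongly2AbsorbingSecond {R M : Type*} [CommRing R] [AddCommGroup M] [Module R M]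
    (N : Submodule R M) : Prop :=
  N ≠ ⊥ ∧ ∀ a b : R, ∀ K : Submodule R M, (a * b) • N ≤ K →
    a • N ≤ K ∨ b • N ≤ K ∨ (a * b) • N = ⊥

/-!
If `N` is `S`-2-absorbing with witness `s`, then for `m ∈ (N :_M s²ab)` the absorbing property
applied to `(sa)(sb)m ∈ N` puts `m` in `(N :_M s²a) ∪ (N :_M s²b)` unless `s³ab` kills `M`.
Both residuals lie in `(N :_M s²ab)`, and a submodule contained in a union of two submodules
lies in one of them, so `(N :_M s²ab)` equals one of them. Conversely, `s³` is a witness of the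
absorbing property: `abm ∈ N` gives `m ∈ (N :_M s²ab)`.
-/

lemma IsMCS.pow_mem {R : Type*} [CommRing R] {S : Set R} (hS : IsMCS S) {s : R} (hs : s ∈ S) :
    ∀ n : ℕ, s ^ n ∈ S
  | 0 => by simpa using hS.2.1
  | n + 1 => by simpa [pow_succ] using hS.2.2 _ (hS.pow_mem hs n) s hs

namespace Submodule

variable {R M : Type*} [CommRing R] [AddCommGroup M] [Module R M]

/-- `(N :_M r)` in the paper's notation. -/
def residual (N : Submodule R M) (r : R) : Submodule R M :=
  N.comap (LinearMap.lsmul R M r)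

variable {N : Submodule R M}

@[simp]
lemma mem_residual {r : R} {m : M} : m ∈ N.residual r ↔ r • m ∈ N := Iff.rfl

lemma residual_le_residual_mul (r t : R) : N.residual r ≤ N.residual (t * r) := fun m hm ↦ by
  simpa [mul_smul] using N.smul_mem t hm

lemma residual_eq_top_iff {r : R} : N.residual r = ⊤ ↔ r ∈ N.colon ⊤ := by
  simp [eq_top_iff', mem_colon]

lemma residual_eq_or_eq_or_eq_top {s : R}
    (hs : ∀ a b : R, ∀ m : M, (a * b) • m ∈ N →
      s * (a * b) ∈ N.colon ⊤ ∨ (s * a) • m ∈ N ∨ (s * b) • m ∈ N) (a b : R) :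
    N.residual (s ^ 2 * (a * b)) = N.residual (s ^ 2 * a) ∨
      N.residual (s ^ 2 * (a * b)) = N.residual (s ^ 2 * b) ∨
      N.residual (s ^ 3 * (a * b)) = ⊤ := by
  by_cases htop : N.residual (s ^ 3 * (a * b)) = ⊤
  · exact Or.inr (Or.inr htop)
  have hsub : (N.residual (s ^ 2 * (a * b)) : Set M) ⊆
      N.residual (s ^ 2 * a) ∪ N.residual (s ^ 2 * b) := by
    intro m hm
    have hm' : (s * a * (s * b)) • m ∈ N := by
      convert mem_residual.mp hm using 2; ring
    rcases hs (s * a) (s * b) m hm' with hcolon | ha | hb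
    · refine absurd (residual_eq_top_iff.mpr ?_) htop
      convert hcolon using 1; ring
    · left; simpa [mul_assoc, pow_two] using ha
    · right; simpa [mul_assoc, pow_two] using hb
  have hle_a : N.residual (s ^ 2 * a) ≤ N.residual (s ^ 2 * (a * b)) := by
    convert residual_le_residual_mul (N := N) (s ^ 2 * a) b using 2; ring
  have hle_b : N.residual (s ^ 2 * b) ≤ N.residual (s ^ 2 * (a * b)) := by
    convert residual_le_residual_mul (N := N) (s ^ 2 * b) a using 2; ring
  rcases AddSubgroupClass.subset_union.mp hsub with h | h
  · exact Or.inl (le_antisymm h hle_a)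
  · exact Or.inr (Or.inl (le_antisymm h hle_b))

lemma absorbing_of_residual_eq_or_eq_or_eq_top {s : R}
    (hs : ∀ a b : R, N.residual (s ^ 2 * (a * b)) = N.residual (s ^ 2 * a) ∨
      N.residual (s ^ 2 * (a * b)) = N.residual (s ^ 2 * b) ∨
      N.residual (s ^ 3 * (a * b)) = ⊤)
    (a b : R) (m : M) (habm : (a * b) • m ∈ N) :
    s ^ 3 * (a * b) ∈ N.colon ⊤ ∨ (s ^ 3 * a) • m ∈ N ∨ (s ^ 3 * b) • m ∈ N := by
  have hm : m ∈ N.residual (s ^ 2 * (a * b)) := residual_le_residual_mul _ (s ^ 2) habm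
  have hcube (c : R) (hc : m ∈ N.residual (s ^ 2 * c)) : m ∈ N.residual (s ^ 3 * c) := by
    convert residual_le_residual_mul _ s hc using 2; ring
  rcases hs a b with h | h | h
  · exact Or.inr (Or.inl (hcube a (h ▸ hm)))
  · exact Or.inr (Or.inr (hcube b (h ▸ hm)))
  · exact Or.inl (residual_eq_top_iff.mp h)

end Submodule

theorem stmt0 {R M : Type*} [CommRing R] [AddCommGroup M] [Module R M]
    (S : Set R) (hS : IsMCS S) (N : Submodule R M)
    (hdisj : ∀ s ∈ S, s ∉ N.colon ⊤) :
    IsS2AbsorbingSubmodule S N ↔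
      ∃ s ∈ S, ∀ a b : R,
        {m : M | (s ^ 2 * (a * b)) • m ∈ N} = {m : M | (s ^ 2 * a) • m ∈ N} ∨
        {m : M | (s ^ 2 * (a * b)) • m ∈ N} = {m : M | (s ^ 2 * b) • m ∈ N} ∨
        {m : M | (s ^ 3 * (a * b)) • m ∈ N} = Set.univ := by
  have hcoe (r : R) : {m : M | r • m ∈ N} = N.residual r := rfl
  simp only [hcoe, SetLike.coe_set_eq, Submodule.coe_eq_univ]
  constructor
  · rintro ⟨-, s, hsS, hs⟩
    exact ⟨s, hsS, N.residual_eq_or_eq_or_eq_top hs⟩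
  · rintro ⟨s, hsS, hs⟩
    exact ⟨hdisj, s ^ 3, hS.pow_mem hsS 3, N.absorbing_of_residual_eq_or_eq_or_eq_top hs⟩
end

section
/- Let R be a commutative ring, S a multiplicatively closed subset of R, M an R-module, and N an S-2-absorbing submodule of M. Then there exists a fixed s ∈ S such that for all t, h ∈ S, either (N :_M th) ⊆ (N :_M ts) or (N :_M th) ⊆ (N :_M sh). -/
open Pointwise

theorem stmt1 {R M : Type*} [CommRing R] [AddCommGroup M] [Module R M]
    (S : Set R) (hS : IsMCS S) (N : Submodule R M)
    (hN : IsS2AbsorbingSubmodule S N) :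
    ∃ s ∈ S, ∀ t ∈ S, ∀ h ∈ S,
      {m : M | (t * h) • m ∈ N} ⊆ {m : M | (t * s) • m ∈ N} ∨
      {m : M | (t * h) • m ∈ N} ⊆ {m : M | (s * h) • m ∈ N} := by
  obtain ⟨hcol, s, hs, habs⟩ := hN
  refine ⟨s, hs, ?_⟩
  intro t ht h hh
  have key : ∀ m : M, (t * h) • m ∈ N → (t * s) • m ∈ N ∨ (s * h) • m ∈ N := by
    intro m hm
    rcases habs t h m hm with hc | hc | hc
    · exact absurd hc (hcol _ (hS.2.2 s hs _ (hS.2.2 t ht h hh)))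
    · rw [mul_comm] at hc; exact Or.inl hc
    · exact Or.inr hc
  by_contra hcon
  push_neg at hcon
  rw [Set.not_subset, Set.not_subset] at hcon
  obtain ⟨⟨m1, hm1, hm1'⟩, ⟨m2, hm2, hm2'⟩⟩ := hcon
  simp only [Set.mem_setOf_eq] at hm1 hm1' hm2 hm2'
  have h1 : (s * h) • m1 ∈ N := (key m1 hm1).resolve_left hm1'
  have h2 : (t * s) • m2 ∈ N := (key m2 hm2).resolve_right hm2'
  have hsum : (t * h) • (m1 + m2) ∈ N := by
    rw [smul_add]; exact N.add_mem hm1 hm2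
  rcases key _ hsum with hc | hc
  · rw [smul_add] at hc
    exact hm1' (by simpa using N.sub_mem hc h2)
  · rw [smul_add] at hc
    exact hm2' (by simpa using N.sub_mem hc h1)
end

section
/- Let R be a commutative ring, S a multiplicatively closed subset of R, and I an S-2-absorbing ideal of R. Then the radical √I is an S-2-absorbing ideal of R, and there is a fixed s ∈ S such that sa² ∈ I for every a ∈ √I. -/
open Pointwise

theorem stmt2 {R : Type*} [CommRing R] (S : Set R) (hS : IsMCS S) (I : Ideal R)
    (hI : IsS2AbsorbingIdeal S I) :
    IsS2AbsorbingIdeal S I.radical ∧ ∃ s ∈ S, ∀ a ∈ I.radical, s * a ^ 2 ∈ I := by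
  obtain ⟨hdisj, s, hsS, habs⟩ := hI
  have hpow : ∀ k : ℕ, s ^ k ∈ S := by
    intro k
    induction k with
    | zero => simpa using hS.2.1
    | succ k ih => rw [pow_succ]; exact hS.2.2 _ ih _ hsS
  -- descent in the exponent of a
  have P : ∀ m k : ℕ, ∀ a : R, s ^ (k + 1) * a ^ (m + 1) ∈ I →
      ∃ j, s ^ (j + 1) * a ^ 2 ∈ I := by
    intro m
    induction m with
    | zero =>
      intro k a h
      refine ⟨k, ?_⟩
      have h2 := I.mul_mem_left a h
      rw [show s ^ (k + 1) * a ^ 2 = a * (s ^ (k + 1) * a ^ (0 + 1)) by ring]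
      exact h2
    | succ m ih =>
      intro k a h
      rcases habs a a (s ^ (k + 1) * a ^ m)
          (by rw [show a * a * (s ^ (k + 1) * a ^ m) = s ^ (k + 1) * a ^ (m + 1 + 1) by ring];
              exact h) with h1 | h2 | h3
      · exact ⟨0, by rw [show s ^ (0 + 1) * a ^ 2 = s * (a * a) by ring]; exact h1⟩
      · exact ih (k + 1) a
          (by rw [show s ^ (k + 1 + 1) * a ^ (m + 1) = s * (a * (s ^ (k + 1) * a ^ m)) by ring];
              exact h2)
      · exact ih (k + 1) a
          (by rw [show s ^ (k + 1 + 1) * a ^ (m + 1) = s * (a * (s ^ (k + 1) * a ^ m)) by ring];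
              exact h3)
  -- descent in the exponent of s
  have G : ∀ k : ℕ, ∀ a : R, s ^ (k + 1) * a ^ 2 ∈ I → s ^ 3 * a ^ 2 ∈ I := by
    intro k
    induction k with
    | zero =>
      intro a h
      have h2 := I.mul_mem_left (s ^ 2) h
      rw [show s ^ 3 * a ^ 2 = s ^ 2 * (s ^ (0 + 1) * a ^ 2) by ring]
      exact h2
    | succ k ih =>
      intro a h
      rcases habs (a ^ 2) (s ^ 2) (s ^ k)
          (by rw [show a ^ 2 * s ^ 2 * s ^ k = s ^ (k + 1 + 1) * a ^ 2 by ring]; exact h)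
          with h1 | h2 | h3
      · rw [show s ^ 3 * a ^ 2 = s * (a ^ 2 * s ^ 2) by ring]; exact h1
      · exact ih a
          (by rw [show s ^ (k + 1) * a ^ 2 = s * (a ^ 2 * s ^ k) by ring]; exact h2)
      · exfalso
        rw [show s * (s ^ 2 * s ^ k) = s ^ (k + 3) by ring] at h3
        exact hdisj _ (hpow (k + 3)) h3
  refine ⟨⟨?_, s, hsS, ?_⟩, s ^ 3, hpow 3, ?_⟩
  · -- S is disjoint from the radical
    intro t ht hmem
    obtain ⟨n, hn⟩ := Ideal.mem_radical_iff.mp hmem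
    cases n with
    | zero =>
      exact hdisj s hsS (by simpa using I.mul_mem_left s hn)
    | succ n =>
      have htn : t ^ (n + 1) ∈ S := by
        clear hn
        induction n with
        | zero => simpa using ht
        | succ n ih => rw [pow_succ]; exact hS.2.2 _ ih _ ht
      exact hdisj _ htn hn
  · -- the radical is S-2-absorbing with the same s
    intro a b c habc
    obtain ⟨n, hn⟩ := Ideal.mem_radical_iff.mp habc
    cases n with
    | zero =>
      exact absurd (by simpa using I.mul_mem_left s hn) (hdisj s hsS)
    | succ m =>
      rw [mul_pow, mul_pow] at hn
      rcases habs _ _ _ hn with h1 | h2 | h3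
      · refine Or.inl (Ideal.mem_radical_iff.mpr ⟨m + 1, ?_⟩)
        rw [show (s * (a * b)) ^ (m + 1) = s ^ m * (s * (a ^ (m + 1) * b ^ (m + 1))) by ring]
        exact I.mul_mem_left _ h1
      · refine Or.inr (Or.inl (Ideal.mem_radical_iff.mpr ⟨m + 1, ?_⟩))
        rw [show (s * (a * c)) ^ (m + 1) = s ^ m * (s * (a ^ (m + 1) * c ^ (m + 1))) by ring]
        exact I.mul_mem_left _ h2
      · refine Or.inr (Or.inr (Ideal.mem_radical_iff.mpr ⟨m + 1, ?_⟩))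
        rw [show (s * (b * c)) ^ (m + 1) = s ^ m * (s * (b ^ (m + 1) * c ^ (m + 1))) by ring]
        exact I.mul_mem_left _ h3
  · -- the pointwise statement with s ^ 3
    intro a ha
    obtain ⟨n, hn⟩ := Ideal.mem_radical_iff.mp ha
    cases n with
    | zero =>
      exact absurd (by simpa using I.mul_mem_left s hn) (hdisj s hsS)
    | succ m =>
      have h0 : s ^ (0 + 1) * a ^ (m + 1) ∈ I := by
        rw [show s ^ (0 + 1) * a ^ (m + 1) = s * a ^ (m + 1) by ring]
        exact I.mul_mem_left s hn
      obtain ⟨j, hj⟩ := P m 0 a h0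
      have := G j a hj
      rw [show s ^ 3 * a ^ 2 = s ^ 3 * a ^ 2 by ring] at this
      exact this
end

section
/- Let R be a commutative ring, S a multiplicatively closed subset, M an R-module, and N a submodule with Ann_R(N) ∩ S = ∅. Then N is an S-2-absorbing second submodule of M if and only if there exists a fixed s ∈ S such that for all a, b ∈ R: s²abN = s²aN or s²abN = s²bN or s³abN = 0. -/
open Pointwise

private lemma mul_smul_le' {R M : Type*} [CommRing R] [AddCommGroup M] [Module R M]
    {a : R} {N K : Submodule R M} (r : R) (h : a • N ≤ K) : (r * a) • N ≤ K := by
  rw [mul_smul]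
  exact le_trans (smul_mono_right r h) (Submodule.smul_le_self_of_tower r K)

theorem stmt3 {R M : Type*} [CommRing R] [AddCommGroup M] [Module R M]
    (S : Set R) (hS : IsMCS S) (N : Submodule R M)
    (hdisj : ∀ s ∈ S, s ∉ N.annihilator) :
    IsS2AbsorbingSecond S N ↔
      ∃ s ∈ S, ∀ a b : R,
        (s ^ 2 * (a * b)) • N = (s ^ 2 * a) • N ∨
        (s ^ 2 * (a * b)) • N = (s ^ 2 * b) • N ∨
        (s ^ 3 * (a * b)) • N = ⊥ := by
  constructor
  · rintro ⟨-, s, hsS, hs⟩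
    refine ⟨s, hsS, fun a b => ?_⟩
    have key := hs (s * a) (s * b) ((s * a * (s * b)) • N) le_rfl
    have e1 : s * a * (s * b) = s ^ 2 * (a * b) := by ring
    rw [e1] at key
    rcases key with h | h | h
    · left
      refine le_antisymm ?_ ?_
      · have e2 : s ^ 2 * (a * b) = b * (s ^ 2 * a) := by ring
        rw [e2, mul_smul]
        exact Submodule.smul_le_self_of_tower b _
      · have e3 : s * (s * a) = s ^ 2 * a := by ring
        rwa [e3] at h
    · right; left
      refine le_antisymm ?_ ?_
      · have e2 : s ^ 2 * (a * b) = a * (s ^ 2 * b) := by ring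
        rw [e2, mul_smul]
        exact Submodule.smul_le_self_of_tower a _
      · have e3 : s * (s * b) = s ^ 2 * b := by ring
        rwa [e3] at h
    · right; right
      have e3 : s * (s ^ 2 * (a * b)) = s ^ 3 * (a * b) := by ring
      rwa [e3] at h
  · rintro ⟨s, hsS, hs⟩
    refine ⟨hdisj, s * (s * s), hS.2.2 s hsS _ (hS.2.2 s hsS s hsS), fun a b K hK => ?_⟩
    rcases hs a b with h | h | h
    · left
      have e1 : s * (s * s) * a = s * (s ^ 2 * a) := by ring
      rw [e1, mul_smul, ← h, ← mul_smul]
      have e2 : s * (s ^ 2 * (a * b)) = (s * s ^ 2) * (a * b) := by ring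
      rw [e2]
      exact mul_smul_le' _ hK
    · right; left
      have e1 : s * (s * s) * b = s * (s ^ 2 * b) := by ring
      rw [e1, mul_smul, ← h, ← mul_smul]
      have e2 : s * (s ^ 2 * (a * b)) = (s * s ^ 2) * (a * b) := by ring
      rw [e2]
      exact mul_smul_le' _ hK
    · right; right
      have e1 : s * (s * s) * (a * b) = s ^ 3 * (a * b) := by ring
      rw [e1, h]
end

section
/- Let R be a commutative ring, S a multiplicatively closed subset, M an R-module, and N an S-2-absorbing second submodule of M. Then there exists a fixed s ∈ S such that for every ideal I of R, every a ∈ R, and every submodule K of M with IaN ⊆ K, one has asN ⊆ K or IsN ⊆ K or Ias ⊆ Ann_R(N). -/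
open Pointwise

lemma ptsmul_le_iff {R M : Type*} [CommRing R] [AddCommGroup M] [Module R M]
    (r : R) (N K : Submodule R M) : r • N ≤ K ↔ ∀ n ∈ N, r • n ∈ K := by
  constructor
  · intro h n hn
    exact h (Submodule.smul_mem_pointwise_smul n r N hn)
  · intro h m hm
    obtain ⟨n, hn, rfl⟩ := Set.mem_smul_set.mp hm
    exact h n hn

lemma ptsmul_eq_bot_iff {R M : Type*} [CommRing R] [AddCommGroup M] [Module R M]
    (r : R) (N : Submodule R M) : r • N = ⊥ ↔ r ∈ N.annihilator := by
  rw [eq_bot_iff, ptsmul_le_iff, Submodule.mem_annihilator]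
  simp [Submodule.mem_bot]


theorem stmt4 {R M : Type*} [CommRing R] [AddCommGroup M] [Module R M]
    (S : Set R) (hS : IsMCS S) (N : Submodule R M)
    (hN : IsS2AbsorbingSecond S N) :
    ∃ s ∈ S, ∀ (I : Ideal R) (a : R) (K : Submodule R M),
      I • (a • N) ≤ K →
        (a * s) • N ≤ K ∨ I • (s • N) ≤ K ∨ (∀ x ∈ I, x * a * s ∈ N.annihilator) := by
  obtain ⟨_, s, hsS, hs⟩ := hN
  refine ⟨s, hsS, ?_⟩
  intro I a K hIK
  by_cases hA : (a * s) • N ≤ K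
  · exact Or.inl hA
  have hA' : ¬ (s * a) • N ≤ K := by rwa [mul_comm]
  have hax : ∀ x ∈ I, (a * x) • N ≤ K := by
    intro x hx
    rw [ptsmul_le_iff]
    intro n hn
    have h1 : x • (a • n) ∈ I • (a • N) :=
      Submodule.smul_mem_smul hx (Submodule.smul_mem_pointwise_smul n a N hn)
    have h2 := hIK h1
    rwa [smul_smul, mul_comm] at h2
  have key : ∀ x ∈ I, (s * x) • N ≤ K ∨ x * a * s ∈ N.annihilator := by
    intro x hx
    rcases hs a x K (hax x hx) with h | h | h
    · exact absurd h hA'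
    · exact Or.inl h
    · right
      rw [ptsmul_eq_bot_iff] at h
      have e : x * a * s = s * (a * x) := by ring
      rwa [e]
  by_cases hAnn : ∀ x ∈ I, x * a * s ∈ N.annihilator
  · exact Or.inr (Or.inr hAnn)
  push_neg at hAnn
  obtain ⟨x₀, hx₀I, hx₀⟩ := hAnn
  have hx₀K : (s * x₀) • N ≤ K := (key x₀ hx₀I).resolve_right hx₀
  refine Or.inr (Or.inl ?_)
  rw [Submodule.smul_le]
  rintro x hx m hm
  obtain ⟨n, hn, rfl⟩ := Set.mem_smul_set.mp hm
  rcases key x hx with h | h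
  · have h1 := (ptsmul_le_iff _ _ _).mp h n hn
    have e : x • s • n = (s * x) • n := by rw [smul_smul, mul_comm]
    rwa [e]
  · rcases hs a (x + x₀) K (hax _ (I.add_mem hx hx₀I)) with h1 | h1 | h1
    · exact absurd h1 hA'
    · have hK1 := (ptsmul_le_iff _ _ _).mp h1 n hn
      have hK0 := (ptsmul_le_iff _ _ _).mp hx₀K n hn
      have e : x • s • n = (s * (x + x₀)) • n - (s * x₀) • n := by
        rw [smul_smul, mul_comm x s, mul_add, add_smul]; abel
      rw [e]
      exact K.sub_mem hK1 hK0
    · exfalso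
      rw [ptsmul_eq_bot_iff] at h1
      have e : x₀ * a * s = s * (a * (x + x₀)) - x * a * s := by ring
      exact hx₀ (e ▸ Submodule.sub_mem _ h1 h)
end

section
/- Let R be a commutative ring, S a multiplicatively closed subset, M an R-module, and N an S-2-absorbing second submodule of M. Then there exists a fixed s ∈ S such that for all ideals I, J of R and every submodule K of M with IJN ⊆ K, one has sIN ⊆ K or sJN ⊆ K or sIJ ⊆ Ann_R(N). -/
open Pointwise

theorem stmt5 {R M : Type*} [CommRing R] [AddCommGroup M] [Module R M]
    (S : Set R) (hS : IsMCS S) (N : Submodule R M)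
    (hN : IsS2AbsorbingSecond S N) :
    ∃ s ∈ S, ∀ (I J : Ideal R) (K : Submodule R M),
      I • (J • N) ≤ K →
        s • (I • N) ≤ K ∨ s • (J • N) ≤ K ∨
        (∀ x ∈ I, ∀ y ∈ J, s * (x * y) ∈ N.annihilator) := by
  obtain ⟨-, s, hsS, hs⟩ := hN
  refine ⟨s, hsS, ?_⟩
  intro I J K hIJK
  have smul_le : ∀ (r : R) (P K' : Submodule R M), r • P ≤ K' ↔ ∀ n ∈ P, r • n ∈ K' := by
    intro r P K'
    constructor
    · intro h n hn; exact h (Submodule.smul_mem_pointwise_smul n r P hn)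
    · intro h x hx
      rw [← SetLike.mem_coe, Submodule.coe_pointwise_smul] at hx
      obtain ⟨n, hn, rfl⟩ := hx
      exact h n hn
  have smul_bot : ∀ (r : R), r • N = ⊥ ↔ ∀ n ∈ N, r • n = 0 := by
    intro r
    rw [eq_bot_iff, smul_le]
    simp
  have habK : ∀ a ∈ I, ∀ b ∈ J, ∀ n ∈ N, (a * b) • n ∈ K := by
    intro a ha b hb n hn
    rw [mul_smul]
    exact hIJK (Submodule.smul_mem_smul ha (Submodule.smul_mem_smul hb hn))
  have habK' : ∀ a ∈ I, ∀ b ∈ J, (a * b) • N ≤ K := fun a ha b hb =>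
    (smul_le _ _ _).mpr (habK a ha b hb)
  by_cases hI : ∀ a ∈ I, ∀ n ∈ N, (s * a) • n ∈ K
  · left
    rw [smul_le]
    intro m hm
    refine Submodule.smul_induction_on hm (fun a ha n hn => ?_) (fun x y hx hy => ?_)
    · rw [← mul_smul]; exact hI a ha n hn
    · rw [smul_add]; exact K.add_mem hx hy
  by_cases hJ : ∀ b ∈ J, ∀ n ∈ N, (s * b) • n ∈ K
  · right; left
    rw [smul_le]
    intro m hm
    refine Submodule.smul_induction_on hm (fun b hb n hn => ?_) (fun x y hx hy => ?_)
    · rw [← mul_smul]; exact hJ b hb n hn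
    · rw [smul_add]; exact K.add_mem hx hy
  right; right
  push_neg at hI hJ
  obtain ⟨a0, ha0I, n1, hn1, ha0⟩ := hI
  obtain ⟨b0, hb0J, n2, hn2, hb0⟩ := hJ
  have ha0' : ¬ (s * a0) • N ≤ K := fun h => ha0 ((smul_le _ _ _).mp h n1 hn1)
  have hb0' : ¬ (s * b0) • N ≤ K := fun h => hb0 ((smul_le _ _ _).mp h n2 hn2)
  have sa0b0 : ∀ n ∈ N, (s * (a0 * b0)) • n = 0 := by
    rcases hs a0 b0 K (habK' _ ha0I _ hb0J) with h' | h' | h'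
    · exact absurd h' ha0'
    · exact absurd h' hb0'
    · exact (smul_bot _).mp h'
  have claimA : ∀ b ∈ J, ∀ n ∈ N, (s * (a0 * b)) • n = 0 := by
    intro b hb
    rcases hs a0 b K (habK' _ ha0I _ hb) with h' | h' | h'
    · exact absurd h' ha0'
    · have hsum : (a0 * (b + b0)) • N ≤ K := by
        rw [smul_le]
        intro n hn
        have e : (a0 * (b + b0)) • n = (a0 * b) • n + (a0 * b0) • n := by module
        rw [e]
        exact K.add_mem (habK _ ha0I _ hb n hn) (habK _ ha0I _ hb0J n hn)
      rcases hs a0 (b + b0) K hsum with h2 | h2 | h2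
      · exact absurd h2 ha0'
      · exfalso
        apply hb0'
        rw [smul_le]
        intro n hn
        have e : (s * b0) • n = (s * (b + b0)) • n - (s * b) • n := by module
        rw [e]
        exact K.sub_mem ((smul_le _ _ _).mp h2 n hn) ((smul_le _ _ _).mp h' n hn)
      · intro n hn
        have h2' := (smul_bot _).mp h2
        have e : (s * (a0 * b)) • n = (s * (a0 * (b + b0))) • n - (s * (a0 * b0)) • n := by
          module
        rw [e, h2' n hn, sa0b0 n hn, sub_zero]
    · exact (smul_bot _).mp h'
  have claimB : ∀ a ∈ I, ∀ n ∈ N, (s * (a * b0)) • n = 0 := by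
    intro a ha
    rcases hs a b0 K (habK' _ ha _ hb0J) with h' | h' | h'
    · have hsum : ((a + a0) * b0) • N ≤ K := by
        rw [smul_le]
        intro n hn
        have e : ((a + a0) * b0) • n = (a * b0) • n + (a0 * b0) • n := by module
        rw [e]
        exact K.add_mem (habK _ ha _ hb0J n hn) (habK _ ha0I _ hb0J n hn)
      rcases hs (a + a0) b0 K hsum with h2 | h2 | h2
      · exfalso
        apply ha0'
        rw [smul_le]
        intro n hn
        have e : (s * a0) • n = (s * (a + a0)) • n - (s * a) • n := by module
        rw [e]
        exact K.sub_mem ((smul_le _ _ _).mp h2 n hn) ((smul_le _ _ _).mp h' n hn)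
      · exact absurd h2 hb0'
      · intro n hn
        have h2' := (smul_bot _).mp h2
        have e : (s * (a * b0)) • n = (s * ((a + a0) * b0)) • n - (s * (a0 * b0)) • n := by
          module
        rw [e, h2' n hn, sa0b0 n hn, sub_zero]
    · exact absurd h' hb0'
    · exact (smul_bot _).mp h'
  intro x hx y hy
  rw [Submodule.mem_annihilator]
  by_cases hx' : (s * x) • N ≤ K
  · by_cases hy' : (s * y) • N ≤ K
    · -- both in K
      have hsum : ((x + a0) * (y + b0)) • N ≤ K := by
        rw [smul_le]
        intro n hn
        have e : ((x + a0) * (y + b0)) • n =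
            (x * y) • n + (x * b0) • n + (a0 * y) • n + (a0 * b0) • n := by module
        rw [e]
        exact K.add_mem (K.add_mem (K.add_mem (habK _ hx _ hy n hn) (habK _ hx _ hb0J n hn))
          (habK _ ha0I _ hy n hn)) (habK _ ha0I _ hb0J n hn)
      rcases hs (x + a0) (y + b0) K hsum with h2 | h2 | h2
      · exfalso
        apply ha0'
        rw [smul_le]
        intro n hn
        have e : (s * a0) • n = (s * (x + a0)) • n - (s * x) • n := by module
        rw [e]
        exact K.sub_mem ((smul_le _ _ _).mp h2 n hn) ((smul_le _ _ _).mp hx' n hn)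
      · exfalso
        apply hb0'
        rw [smul_le]
        intro n hn
        have e : (s * b0) • n = (s * (y + b0)) • n - (s * y) • n := by module
        rw [e]
        exact K.sub_mem ((smul_le _ _ _).mp h2 n hn) ((smul_le _ _ _).mp hy' n hn)
      · intro n hn
        have h2' := (smul_bot _).mp h2
        have e : (s * (x * y)) • n = (s * ((x + a0) * (y + b0))) • n - (s * (x * b0)) • n
            - (s * (a0 * y)) • n - (s * (a0 * b0)) • n := by module
        rw [e, h2' n hn, claimB x hx n hn, claimA y hy n hn, sa0b0 n hn]
        simp
    · -- hx' yes, hy' no : use (x+a0)*y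
      have hsum : ((x + a0) * y) • N ≤ K := by
        rw [smul_le]
        intro n hn
        have e : ((x + a0) * y) • n = (x * y) • n + (a0 * y) • n := by module
        rw [e]
        exact K.add_mem (habK _ hx _ hy n hn) (habK _ ha0I _ hy n hn)
      rcases hs (x + a0) y K hsum with h2 | h2 | h2
      · exfalso
        apply ha0'
        rw [smul_le]
        intro n hn
        have e : (s * a0) • n = (s * (x + a0)) • n - (s * x) • n := by module
        rw [e]
        exact K.sub_mem ((smul_le _ _ _).mp h2 n hn) ((smul_le _ _ _).mp hx' n hn)
      · exact absurd h2 hy'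
      · intro n hn
        have h2' := (smul_bot _).mp h2
        have e : (s * (x * y)) • n = (s * ((x + a0) * y)) • n - (s * (a0 * y)) • n := by module
        rw [e, h2' n hn, claimA y hy n hn, sub_zero]
  · by_cases hy' : (s * y) • N ≤ K
    · -- hx' no, hy' yes : use x*(y+b0)
      have hsum : (x * (y + b0)) • N ≤ K := by
        rw [smul_le]
        intro n hn
        have e : (x * (y + b0)) • n = (x * y) • n + (x * b0) • n := by module
        rw [e]
        exact K.add_mem (habK _ hx _ hy n hn) (habK _ hx _ hb0J n hn)
      rcases hs x (y + b0) K hsum with h2 | h2 | h2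
      · exact absurd h2 hx'
      · exfalso
        apply hb0'
        rw [smul_le]
        intro n hn
        have e : (s * b0) • n = (s * (y + b0)) • n - (s * y) • n := by module
        rw [e]
        exact K.sub_mem ((smul_le _ _ _).mp h2 n hn) ((smul_le _ _ _).mp hy' n hn)
      · intro n hn
        have h2' := (smul_bot _).mp h2
        have e : (s * (x * y)) • n = (s * (x * (y + b0))) • n - (s * (x * b0)) • n := by module
        rw [e, h2' n hn, claimB x hx n hn, sub_zero]
    · rcases hs x y K (habK' _ hx _ hy) with h' | h' | h'
      · exact absurd h' hx'
      · exact absurd h' hy'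
      · exact (smul_bot _).mp h'
end

section
/- Let R be a commutative ring, M an R-module, S a multiplicatively closed subset of R, and S* = {x ∈ R : x/1 is a unit of S⁻¹R} the saturation of S. A submodule N of M is an S-2-absorbing second submodule if and only if N is an S*-2-absorbing second submodule of M. -/
open Pointwise

/-- If `x/1` is a unit in the localization, then some multiple of `x` lies in `S`. -/
lemma exists_mul_mem_of_isUnit {R : Type*} [CommRing R] (S : Submonoid R) (x : R)
    (h : IsUnit (algebraMap R (Localization S) x)) : ∃ r : R, x * r ∈ S := by
  obtain ⟨u, hu⟩ := isUnit_iff_exists_inv.mp h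
  obtain ⟨⟨y, t⟩, hyt⟩ := IsLocalization.surj S u
  have heq : algebraMap R (Localization S) (x * y) = algebraMap R (Localization S) t := by
    push_cast [map_mul]
    rw [← hyt, ← mul_assoc, hu, one_mul]
  obtain ⟨c, hc⟩ := (IsLocalization.eq_iff_exists S _).mp heq
  refine ⟨y * c, ?_⟩
  have : x * (y * ↑c) = ↑c * ↑t := by linear_combination hc
  rw [this]; exact S.mul_mem c.2 t.2

lemma mul_smul_le_of_smul_le {R M : Type*} [CommRing R] [AddCommGroup M] [Module R M]
    (a b : R) (N K : Submodule R M) (h : b • N ≤ K) : (a * b) • N ≤ K := by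
  rw [mul_smul]
  exact le_trans (smul_mono_right a h) (Submodule.smul_le_self_of_tower a K)

theorem stmt7 {R M : Type*} [CommRing R] [AddCommGroup M] [Module R M]
    (S : Submonoid R) (h0 : (0 : R) ∉ S) (N : Submodule R M) :
    IsS2AbsorbingSecond (S : Set R) N ↔
      IsS2AbsorbingSecond {x : R | IsUnit (algebraMap R (Localization S) x)} N := by
  constructor
  · rintro ⟨h1, s, hs, hmain⟩
    refine ⟨?_, s, IsLocalization.map_units (Localization S) ⟨s, hs⟩, hmain⟩
    intro x hx hxann
    obtain ⟨r, hr⟩ := exists_mul_mem_of_isUnit S x hx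
    exact h1 (x * r) hr (Ideal.mul_mem_right r _ hxann)
  · rintro ⟨h1, s, hs, hmain⟩
    refine ⟨fun t ht => h1 t (IsLocalization.map_units (Localization S) ⟨t, ht⟩), ?_⟩
    obtain ⟨r, hr⟩ := exists_mul_mem_of_isUnit S s hs
    refine ⟨s * r, hr, fun a b K hab => ?_⟩
    rcases hmain a b K hab with h | h | h
    · left
      have : s * r * a = r * (s * a) := by ring
      rw [this]; exact mul_smul_le_of_smul_le r (s * a) N K h
    · right; left
      have : s * r * b = r * (s * b) := by ring
      rw [this]; exact mul_smul_le_of_smul_le r (s * b) N K h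
    · right; right
      have : s * r * (a * b) = r * (s * (a * b)) := by ring
      rw [this, mul_smul, h, Submodule.smul_bot']
end

section
/- Let R be a commutative ring, S a multiplicatively closed subset, M an R-module, and N a finitely generated S-2-absorbing second submodule of M. Then the localization S⁻¹N is a strongly 2-absorbing second submodule of S⁻¹M. -/
open Pointwise

lemma aux_smul_le {A W : Type*} [CommRing A] [AddCommGroup W] [Module A W] (r : A)
    (N K : Submodule A W) : r • N ≤ K ↔ ∀ m ∈ N, r • m ∈ K := by
  constructor
  · intro h m hm; exact h (Submodule.smul_mem_pointwise_smul m r N hm)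
  · intro h x hx
    obtain ⟨m, hm, rfl⟩ := Set.mem_smul_set.mp hx
    exact h m hm

lemma aux_smul_bot {A W : Type*} [CommRing A] [AddCommGroup W] [Module A W] (r : A)
    (N : Submodule A W) : r • N = ⊥ ↔ ∀ m ∈ N, r • m = 0 := by
  rw [eq_bot_iff, aux_smul_le]; simp

lemma aux_mem_localized {R M : Type*} [CommRing R] [AddCommGroup M] [Module R M]
    (S : Submonoid R) (N : Submodule R M) (x : LocalizedModule S M) :
    x ∈ N.localized S ↔ ∃ m ∈ N, ∃ s : S, LocalizedModule.mk m s = x := by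
  rw [Submodule.mem_localized']
  simp_rw [← IsLocalizedModule.mk_eq_mk']


theorem stmt8 {R M : Type*} [CommRing R] [AddCommGroup M] [Module R M]
    (S : Submonoid R) (h0 : (0 : R) ∉ S) (N : Submodule R M) (hfg : N.FG)
    (hN : IsS2AbsorbingSecond (S : Set R) N) :
    IsStrongly2AbsorbingSecond (N.localized S) := by
  classical
  obtain ⟨hann, s, hsS, hmain⟩ := hN
  refine ⟨?_, ?_⟩
  · -- nontrivial
    intro hbot
    obtain ⟨T, hT⟩ := hfg
    have hz : ∀ x : T, ∃ c : S, (c : R) • (x : M) = 0 := by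
      intro x
      have hxN : (x : M) ∈ N := by
        rw [← hT]; exact Submodule.subset_span x.2
      have : LocalizedModule.mk (x : M) (1 : S) = 0 := by
        have : LocalizedModule.mk (x : M) (1 : S) ∈ N.localized S :=
          (aux_mem_localized S N _).mpr ⟨x, hxN, 1, rfl⟩
        rw [hbot] at this
        simpa using this
      rw [IsLocalizedModule.mk_eq_mk', IsLocalizedModule.mk'_eq_zero'] at this
      exact this
    choose f hf using hz
    set c : S := ∏ x ∈ T.attach, f x with hc
    have hcx : ∀ x : T, (c : R) • (x : M) = 0 := by
      intro x
      have : c = f x * ∏ y ∈ T.attach.erase x, f y := by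
        rw [hc, ← Finset.mul_prod_erase T.attach f (Finset.mem_attach T x)]
      rw [this]
      push_cast
      rw [mul_comm, mul_smul, hf x, smul_zero]
    have hcann : (c : R) ∈ N.annihilator := by
      rw [Submodule.mem_annihilator]
      intro m hm
      rw [← hT] at hm
      induction hm using Submodule.span_induction with
      | mem x hx => exact hcx ⟨x, hx⟩
      | zero => simp
      | add x y _ _ hx hy => rw [smul_add, hx, hy, add_zero]
      | smul r x _ hx => rw [smul_comm, hx, smul_zero]
    exact hann c c.2 hcann
  · intro a b K hab
    obtain ⟨⟨r1, s1⟩, rfl⟩ : ∃ y : R × S, Localization.mk y.1 y.2 = a :=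
      Localization.induction_on a fun y => ⟨y, rfl⟩
    obtain ⟨⟨r2, s2⟩, rfl⟩ : ∃ y : R × S, Localization.mk y.1 y.2 = b :=
      Localization.induction_on b fun y => ⟨y, rfl⟩
    rw [Localization.mk_mul] at hab ⊢
    rw [aux_smul_le] at hab
    -- K' : preimage of K in M
    set K' : Submodule R M := (K.restrictScalars R).comap (LocalizedModule.mkLinearMap S M) with hK'
    have habK' : (r1 * r2) • N ≤ K' := by
      rw [aux_smul_le]
      intro m hm
      have h1 : LocalizedModule.mk m (s1 * s2) ∈ N.localized S :=
        (aux_mem_localized S N _).mpr ⟨m, hm, s1 * s2, rfl⟩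
      have h2 := hab _ h1
      rw [LocalizedModule.mk_smul_mk] at h2
      -- mk ((r1*r2) • m) ((s1*s2)*(s1*s2)) ∈ K ; multiply by mk (s1*s2) 1
      have h3 : Localization.mk ((s1 * s2 : S) : R) 1 • LocalizedModule.mk ((r1 * r2) • m) (s1 * s2 * (s1 * s2)) ∈ K := Submodule.smul_mem _ _ h2
      rw [LocalizedModule.mk_smul_mk] at h3
      have h4 : LocalizedModule.mk (((s1 * s2 : S) : R) • (r1 * r2) • m) (1 * (s1 * s2 * (s1 * s2))) = LocalizedModule.mk ((r1 * r2) • m) (s1 * s2) := by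
        rw [LocalizedModule.mk_eq]
        exact ⟨1, by simp only [Submonoid.smul_def, Submonoid.coe_mul, Submonoid.coe_one, one_smul]; module⟩
      rw [h4] at h3
      -- again multiply to get mk _ 1
      have h5 : Localization.mk ((s1 * s2 : S) : R) 1 • LocalizedModule.mk ((r1 * r2) • m) (s1 * s2) ∈ K := Submodule.smul_mem _ _ h3
      rw [LocalizedModule.mk_smul_mk] at h5
      have h6 : LocalizedModule.mk (((s1 * s2 : S) : R) • (r1 * r2) • m) (1 * (s1 * s2)) = LocalizedModule.mk ((r1 * r2) • m) 1 := by
        rw [LocalizedModule.mk_eq]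
        exact ⟨1, by simp only [Submonoid.smul_def, Submonoid.coe_mul, Submonoid.coe_one, one_smul]; module⟩
      rw [h6] at h5
      simp only [hK', Submodule.mem_comap, Submodule.restrictScalars_mem,
        LocalizedModule.mkLinearMap_apply]
      exact h5
    rcases hmain r1 r2 K' habK' with h | h | h
    · left
      rw [aux_smul_le]
      rintro x hx
      obtain ⟨m, hm, t, rfl⟩ := (aux_mem_localized S N x).mp hx
      have h1 : (s * r1) • m ∈ K' := (aux_smul_le _ _ _).mp h m hm
      simp only [hK', Submodule.mem_comap, Submodule.restrictScalars_mem,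
        LocalizedModule.mkLinearMap_apply] at h1
      have h2 : Localization.mk 1 (⟨s, hsS⟩ * s1 * t) • LocalizedModule.mk ((s * r1) • m) (1 : S) ∈ K := Submodule.smul_mem _ _ h1
      rw [LocalizedModule.mk_smul_mk] at h2
      have h3 : LocalizedModule.mk ((1 : R) • (s * r1) • m) (⟨s, hsS⟩ * s1 * t * 1) = Localization.mk r1 s1 • LocalizedModule.mk m t := by
        rw [LocalizedModule.mk_smul_mk, LocalizedModule.mk_eq]
        exact ⟨1, by simp only [Submonoid.smul_def, Submonoid.coe_mul, Submonoid.coe_one, one_smul]; module⟩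
      rwa [h3] at h2
    · right; left
      rw [aux_smul_le]
      rintro x hx
      obtain ⟨m, hm, t, rfl⟩ := (aux_mem_localized S N x).mp hx
      have h1 : (s * r2) • m ∈ K' := (aux_smul_le _ _ _).mp h m hm
      simp only [hK', Submodule.mem_comap, Submodule.restrictScalars_mem,
        LocalizedModule.mkLinearMap_apply] at h1
      have h2 : Localization.mk 1 (⟨s, hsS⟩ * s2 * t) • LocalizedModule.mk ((s * r2) • m) (1 : S) ∈ K := Submodule.smul_mem _ _ h1
      rw [LocalizedModule.mk_smul_mk] at h2
      have h3 : LocalizedModule.mk ((1 : R) • (s * r2) • m) (⟨s, hsS⟩ * s2 * t * 1) = Localization.mk r2 s2 • LocalizedModule.mk m t := by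
        rw [LocalizedModule.mk_smul_mk, LocalizedModule.mk_eq]
        exact ⟨1, by simp only [Submonoid.smul_def, Submonoid.coe_mul, Submonoid.coe_one, one_smul]; module⟩
      rwa [h3] at h2
    · right; right
      rw [aux_smul_bot]
      rintro x hx
      obtain ⟨m, hm, t, rfl⟩ := (aux_mem_localized S N x).mp hx
      have h1 : (s * (r1 * r2)) • m = 0 := (aux_smul_bot _ _).mp h m hm
      rw [LocalizedModule.mk_smul_mk]
      have : LocalizedModule.mk ((r1 * r2) • m) (s1 * s2 * t) = LocalizedModule.mk (0 : M) (1 : S) := by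
        rw [LocalizedModule.mk_eq]
        refine ⟨⟨s, hsS⟩, ?_⟩
        simp only [one_smul, smul_zero, Submonoid.smul_def, smul_smul]
        exact h1
      rw [this]
      simp
end

section
/- Let R be a commutative ring, S a multiplicatively closed subset, M an R-module, and N an S-2-absorbing second submodule of M. Then Ann_R(N) is an S-2-absorbing ideal of R. -/
open Pointwise

theorem stmt11 {R M : Type*} [CommRing R] [AddCommGroup M] [Module R M]
    (S : Set R) (hS : IsMCS S) (N : Submodule R M)
    (hN : IsS2AbsorbingSecond S N) :
    IsS2AbsorbingIdeal S N.annihilator := by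
  obtain ⟨h1, s, hsS, h2⟩ := hN
  refine ⟨h1, s, hsS, fun a b c habc => ?_⟩
  set K : Submodule R M := LinearMap.ker (LinearMap.lsmul R M c) with hK
  have hle : (a * b) • N ≤ K := by
    intro x hx
    obtain ⟨n, hn, rfl⟩ := Set.mem_smul_set.mp hx
    simp only [hK, LinearMap.mem_ker, LinearMap.lsmul_apply]
    rw [smul_smul]
    have := Submodule.mem_annihilator.mp habc n hn
    rw [show c * (a * b) = a * b * c by ring]
    exact this
  have smul_bot : ∀ r : R, r • N ≤ K → r * c ∈ N.annihilator := by
    intro r hr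
    rw [Submodule.mem_annihilator]
    intro n hn
    have : r • n ∈ K := hr (Submodule.smul_mem_pointwise_smul n r N hn)
    simp only [hK, LinearMap.mem_ker, LinearMap.lsmul_apply] at this
    rw [mul_comm r c, mul_smul]
    exact this
  have ann_of_bot : ∀ r : R, r • N = ⊥ → r ∈ N.annihilator := by
    intro r hr
    rw [Submodule.mem_annihilator]
    intro n hn
    have : r • n ∈ r • N := Submodule.smul_mem_pointwise_smul n r N hn
    rw [hr] at this
    exact this
  rcases h2 a b K hle with h | h | h
  · have := smul_bot (s * a) h
    rw [show s * a * c = s * (a * c) by ring] at this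
    right; left; exact this
  · have := smul_bot (s * b) h
    rw [show s * b * c = s * (b * c) by ring] at this
    right; right; exact this
  · left
    exact ann_of_bot _ h
end

section
/- Let R be a commutative ring, S a multiplicatively closed subset, M an R-module, and N an S-2-absorbing second submodule of M. If K is a submodule of M with (K :_R N) ∩ S = ∅, then (K :_R N) is an S-2-absorbing ideal of R. -/
open Pointwise

theorem Submodule.mem_colon_comap_smul_iff {R M : Type*} [CommSemiring R] [AddCommMonoid M]
    [Module R M] {K : Submodule R M} {S : Set M} {c r : R} :
    r ∈ (K.comap (c • LinearMap.id)).colon S ↔ c * r ∈ K.colon S := by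
  simp only [Submodule.mem_colon, Submodule.mem_comap, LinearMap.smul_apply, LinearMap.id_apply,
    mul_smul]

theorem stmt12_general {R M : Type*} [CommRing R] [AddCommGroup M] [Module R M]
    (S : Set R) (N K : Submodule R M)
    (hN : IsS2AbsorbingSecond S N)
    (hdisj : ∀ s ∈ S, s ∉ K.colon N) :
    IsS2AbsorbingIdeal S (K.colon N) := by
  obtain ⟨-, s, hsS, hs⟩ := hN
  refine ⟨hdisj, s, hsS, fun a b c habc => ?_⟩
  -- `K' = (K :_M c)`, so the hypothesis `a * b * c ∈ (K :_R N)` reads `(a * b) • N ≤ K'`.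
  set K' := K.comap (c • LinearMap.id)
  have hK' : ∀ r, r • N ≤ K' ↔ c * r ∈ K.colon N := fun r => by
    rw [← Submodule.mem_colon_iff_le, Submodule.mem_colon_comap_smul_iff]
  rcases hs a b K' ((hK' _).2 (by rwa [mul_comm])) with h | h | h
  · exact Or.inr <| Or.inl <| by convert (hK' _).1 h using 1; ring
  · exact Or.inr <| Or.inr <| by convert (hK' _).1 h using 1; ring
  · exact Or.inl <| Submodule.mem_colon_iff_le.2 (h ▸ bot_le)

theorem stmt12 {R M : Type*} [CommRing R] [AddCommGroup M] [Module R M]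
    (S : Set R) (hS : IsMCS S) (N K : Submodule R M)
    (hN : IsS2AbsorbingSecond S N)
    (hdisj : ∀ s ∈ S, s ∉ K.colon N) :
    IsS2AbsorbingIdeal S (K.colon N) :=
  stmt12_general S N K hN hdisj
end

section
/- Let R be a commutative ring, S a multiplicatively closed subset, M an R-module, and N an S-2-absorbing second submodule of M. Then there exists a fixed s ∈ S such that sⁿN = sⁿ⁺¹N for all n ≥ 3. -/
open Pointwise

theorem stmt13 {R M : Type*} [CommRing R] [AddCommGroup M] [Module R M]
    (S : Set R) (hS : IsMCS S) (N : Submodule R M)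
    (hN : IsS2AbsorbingSecond S N) :
    ∃ s ∈ S, ∀ n : ℕ, 3 ≤ n → (s ^ n) • N = (s ^ (n + 1)) • N := by
  obtain ⟨hann, s, hsS, hp⟩ := hN
  refine ⟨s, hsS, ?_⟩
  have hpow : ∀ k : ℕ, s ^ (k + 1) ∈ S := by
    intro k
    induction k with
    | zero => simpa using hsS
    | succ k ih => rw [pow_succ]; exact hS.2.2 _ ih _ hsS
  -- key: s^3 • N ≤ s^4 • N
  have hkey : (s ^ 3) • N ≤ (s ^ 4) • N := by
    have h := hp (s * s) (s * s) (((s * s) * (s * s)) • N) le_rfl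
    have e3 : s * (s * s) = s ^ 3 := by ring
    have e4 : (s * s) * (s * s) = s ^ 4 := by ring
    rw [e3, e4] at h
    have e5 : s * s ^ 4 = s ^ 5 := by ring
    rw [e5] at h
    rcases h with h | h | h
    · exact h
    · exact h
    · exfalso
      apply hann (s ^ 5) (hpow 4)
      rw [Submodule.mem_annihilator]
      intro m hm
      have : (s ^ 5) • m ∈ (s ^ 5) • N := Submodule.smul_mem_pointwise_smul m (s ^ 5) N hm
      rw [h] at this
      simpa using this
  -- monotone smul
  have hmono : ∀ (r : R) (A B : Submodule R M), A ≤ B → r • A ≤ r • B := by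
    intro r A B hAB x hx
    obtain ⟨y, hy, rfl⟩ := Set.mem_smul_set.mp hx
    exact Set.smul_mem_smul_set (hAB hy)
  intro n hn
  obtain ⟨k, rfl⟩ := Nat.exists_eq_add_of_le hn
  apply le_antisymm
  · have : (s ^ k) • ((s ^ 3) • N) ≤ (s ^ k) • ((s ^ 4) • N) := hmono _ _ _ hkey
    rw [← mul_smul, ← mul_smul, ← pow_add, ← pow_add] at this
    have e1 : k + 3 = 3 + k := by ring
    have e2 : k + 4 = 3 + k + 1 := by ring
    rw [e1, e2] at this
    exact this
  · intro x hx
    rw [pow_succ, mul_smul] at hx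
    obtain ⟨y, hy, rfl⟩ := Set.mem_smul_set.mp hx
    obtain ⟨z, hz, rfl⟩ := Set.mem_smul_set.mp hy
    exact Set.mem_smul_set.mpr ⟨s • z, N.smul_mem s hz, rfl⟩
end

section
/- Let R be a commutative ring, S a multiplicatively closed subset, M a comultiplication R-module, and N a submodule of M. If Ann_R(N) is an S-2-absorbing ideal of R, then N is an S-2-absorbing second submodule of M. -/
open Pointwise

lemma smul_le_iff' {R M : Type*} [CommRing R] [AddCommGroup M] [Module R M]
    (c : R) (N K : Submodule R M) : c • N ≤ K ↔ ∀ n ∈ N, c • n ∈ K := by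
  constructor
  · intro h n hn
    exact h (Submodule.smul_mem_pointwise_smul n c N hn)
  · intro h x hx
    rw [← SetLike.mem_coe, Submodule.coe_pointwise_smul] at hx
    obtain ⟨n, hn, rfl⟩ := hx
    exact h n hn

theorem stmt14 {R M : Type*} [CommRing R] [AddCommGroup M] [Module R M]
    (S : Set R) (hS : IsMCS S)
    (hcomul : ∀ L : Submodule R M, ∀ m : M, m ∈ L ↔ ∀ r ∈ L.annihilator, r • m = 0)
    (N : Submodule R M) (hann : IsS2AbsorbingIdeal S N.annihilator) :
    IsS2AbsorbingSecond S N := by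
  obtain ⟨h1, s, hsS, hs⟩ := hann
  refine ⟨h1, s, hsS, ?_⟩
  intro a b K hK
  -- key fact: r ∈ Ann K → a*b*r ∈ Ann N
  have F : ∀ r ∈ K.annihilator, a * b * r ∈ N.annihilator := by
    intro r hr
    rw [Submodule.mem_annihilator]
    intro n hn
    have h1 : (a * b) • n ∈ K := (smul_le_iff' _ _ _).mp hK n hn
    have h2 : r • ((a * b) • n) = 0 := Submodule.mem_annihilator.mp hr _ h1
    calc (a * b * r) • n = r • ((a * b) • n) := by rw [← mul_smul, mul_comm]
    _ = 0 := h2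
  by_cases hab : s * (a * b) ∈ N.annihilator
  · right; right
    rw [eq_bot_iff]
    intro x hx
    rw [← SetLike.mem_coe, Submodule.coe_pointwise_smul] at hx
    obtain ⟨n, hn, rfl⟩ := hx
    simpa using Submodule.mem_annihilator.mp hab n hn
  by_contra hcon
  push_neg at hcon
  obtain ⟨hA, hB, -⟩ := hcon
  -- extract witnesses
  have hAw : ∃ r1 ∈ K.annihilator, s * (a * r1) ∉ N.annihilator := by
    rw [smul_le_iff'] at hA
    push_neg at hA
    obtain ⟨n1, hn1, hn1K⟩ := hA
    rw [hcomul K] at hn1K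
    push_neg at hn1K
    obtain ⟨r1, hr1, hr1ne⟩ := hn1K
    refine ⟨r1, hr1, fun h => hr1ne ?_⟩
    have := Submodule.mem_annihilator.mp h n1 hn1
    calc r1 • (s * a) • n1 = (s * (a * r1)) • n1 := by rw [← mul_smul]; ring_nf
    _ = 0 := this
  have hBw : ∃ r2 ∈ K.annihilator, s * (b * r2) ∉ N.annihilator := by
    rw [smul_le_iff'] at hB
    push_neg at hB
    obtain ⟨n2, hn2, hn2K⟩ := hB
    rw [hcomul K] at hn2K
    push_neg at hn2K
    obtain ⟨r2, hr2, hr2ne⟩ := hn2K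
    refine ⟨r2, hr2, fun h => hr2ne ?_⟩
    have := Submodule.mem_annihilator.mp h n2 hn2
    calc r2 • (s * b) • n2 = (s * (b * r2)) • n2 := by rw [← mul_smul]; ring_nf
    _ = 0 := this
  obtain ⟨r1, hr1, hA1⟩ := hAw
  obtain ⟨r2, hr2, hB2⟩ := hBw
  have hbr1 : s * (b * r1) ∈ N.annihilator := by
    rcases hs a b r1 (F r1 hr1) with h | h | h
    · exact absurd h hab
    · exact absurd h hA1
    · exact h
  have har2 : s * (a * r2) ∈ N.annihilator := by
    rcases hs a b r2 (F r2 hr2) with h | h | h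
    · exact absurd h hab
    · exact h
    · exact absurd h hB2
  have hr12 : r1 + r2 ∈ K.annihilator := K.annihilator.add_mem hr1 hr2
  rcases hs a b (r1 + r2) (F _ hr12) with h | h | h
  · exact hab h
  · apply hA1
    have := N.annihilator.sub_mem h har2
    have e : s * (a * (r1 + r2)) - s * (a * r2) = s * (a * r1) := by ring
    rwa [e] at this
  · apply hB2
    have := N.annihilator.sub_mem h hbr1
    have e : s * (b * (r1 + r2)) - s * (b * r1) = s * (b * r2) := by ring
    rwa [e] at this
end

section
/- Let R be a commutative ring, S a multiplicatively closed subset, and M an R-module. If N is an S-second submodule of M, then there exists a fixed s ∈ S such that whenever abN ⊆ K for a, b ∈ R and a submodule K of M, then sa ∈ Ann_R(N) or sb ∈ Ann_R(N) or sN ⊆ K. -/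
open Pointwise


/-!
Let `s` be the fixed element of the `S`-second submodule `N`. Applying the `S`-second property to
`s² N ≤ s² N` gives `s N ≤ s² N`, since `s³ ∉ Ann(N)`. Now if `ab N ≤ K`, then `b N ≤ a⁻¹ K`, so
either `sb N = 0` or `as N ≤ K`; in the latter case either `s N ≤ K` or `as² N = 0`, and then
`sa N ≤ a s² N = 0`.
-/

section

variable {R M : Type*} [CommRing R] [AddCommGroup M] [Module R M]

namespace Submodule

theorem pointwise_smul_le_iff_le_comap (r : R) (N K : Submodule R M) :
    r • N ≤ K ↔ N ≤ K.comap (DistribSMul.toLinearMap R M r) :=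
  map_le_iff_le_comap

theorem pointwise_smul_eq_bot_iff (r : R) (N : Submodule R M) :
    r • N = ⊥ ↔ r ∈ N.annihilator := by
  rw [eq_bot_iff, pointwise_smul_le_iff_le_comap, mem_annihilator]
  exact ⟨fun h n hn => (mem_bot R).1 (h hn), fun h n hn => (mem_bot R).2 (h n hn)⟩

theorem mul_smul_le_iff_smul_le_comap (a b : R) (N K : Submodule R M) :
    (a * b) • N ≤ K ↔ b • N ≤ K.comap (DistribSMul.toLinearMap R M a) := by
  rw [mul_smul, pointwise_smul_le_iff_le_comap]

theorem mul_mem_annihilator_of_smul_le {a s t : R} {N : Submodule R M}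
    (hst : s • N ≤ t • N) (ht : a * t ∈ N.annihilator) : a * s ∈ N.annihilator := by
  rw [← pointwise_smul_eq_bot_iff, eq_bot_iff] at ht ⊢
  calc (a * s) • N = a • s • N := mul_smul a s N
    _ ≤ a • t • N := smul_mono_right a hst
    _ = (a * t) • N := (mul_smul a t N).symm
    _ ≤ ⊥ := ht

end Submodule

def IsSSecondWitness (s : R) (N : Submodule R M) : Prop :=
  ∀ r : R, ∀ K : Submodule R M, r • N ≤ K → (r * s) • N = ⊥ ∨ s • N ≤ K

namespace IsSSecondWitness

variable {s : R} {N : Submodule R M}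

theorem smul_le_mul_self_smul (hs : IsSSecondWitness s N)
    (hs3 : s * s * s ∉ N.annihilator) : s • N ≤ (s * s) • N :=
  (hs (s * s) _ le_rfl).resolve_left fun h =>
    hs3 ((Submodule.pointwise_smul_eq_bot_iff _ _).1 h)

theorem mem_annihilator_or_smul_le (hs : IsSSecondWitness s N) (hss : s • N ≤ (s * s) • N)
    {a b : R} {K : Submodule R M} (hab : (a * b) • N ≤ K) :
    s * a ∈ N.annihilator ∨ s * b ∈ N.annihilator ∨ s • N ≤ K := by
  rw [Submodule.mul_smul_le_iff_smul_le_comap] at hab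
  rcases hs b _ hab with hbs | hsa
  · rw [Submodule.pointwise_smul_eq_bot_iff, mul_comm] at hbs
    exact Or.inr (Or.inl hbs)
  rw [← Submodule.mul_smul_le_iff_smul_le_comap] at hsa
  rcases hs (a * s) K hsa with has | hsK
  · rw [Submodule.pointwise_smul_eq_bot_iff, mul_assoc] at has
    exact Or.inl (mul_comm a s ▸ Submodule.mul_mem_annihilator_of_smul_le hss has)
  · exact Or.inr (Or.inr hsK)

end IsSSecondWitness

end

theorem stmt15 {R M : Type*} [CommRing R] [AddCommGroup M] [Module R M]
    (S : Set R) (hS : IsMCS S) (N : Submodule R M)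
    (hN : IsSSecond S N) :
    ∃ s ∈ S, ∀ a b : R, ∀ K : Submodule R M, (a * b) • N ≤ K →
      s * a ∈ N.annihilator ∨ s * b ∈ N.annihilator ∨ s • N ≤ K := by
  obtain ⟨hann, s, hsS, hs : IsSSecondWitness s N⟩ := hN
  have hss := hs.smul_le_mul_self_smul (hann _ (hS.2.2 _ (hS.2.2 _ hsS _ hsS) _ hsS))
  exact ⟨s, hsS, fun a b K => hs.mem_annihilator_or_smul_le hss⟩
end

section
/- Let R be a commutative ring, S a multiplicatively closed subset, and M an R-module. If N₁ and N₂ are S-second submodules of M, then N₁ + N₂ is an S-2-absorbing second submodule of M. -/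
open Pointwise

private lemma auxSSecond {R M : Type*} [CommRing R] [AddCommGroup M] [Module R M]
    (a b s1 t : R) (N K : Submodule R M)
    (hs1 : ∀ r : R, ∀ K' : Submodule R M, r • N ≤ K' → (r * s1) • N = ⊥ ∨ s1 • N ≤ K')
    (hK : (a * b) • N ≤ K) :
    ((s1 * t * a) • N ≤ K ∧ (s1 * t * (a * b)) • N = ⊥) ∨
    ((s1 * t * b) • N ≤ K ∧ (s1 * t * (a * b)) • N = ⊥) ∨
    ((s1 * t * a) • N ≤ K ∧ (s1 * t * b) • N ≤ K) := by
  have main : ∀ x y : R, s1 • N ≤ x • N → (x * y) • N ≤ K → (s1 * t * y) • N ≤ K := by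
    intro x y hx hxy
    rw [show s1 * t * y = (t * y) * s1 by ring, mul_smul]
    calc (t * y) • (s1 • N) ≤ (t * y) • (x • N) := smul_mono_right _ hx
      _ = t • ((x * y) • N) := by
          rw [← mul_smul, ← mul_smul, show t * y * x = t * (x * y) by ring]
      _ ≤ t • K := smul_mono_right t hxy
      _ ≤ K := Submodule.smul_le_self_of_tower t K
  rcases hs1 a (a • N) le_rfl with hA | hA
  · left
    constructor
    · rw [show s1 * t * a = t * (a * s1) by ring, mul_smul, hA, Submodule.smul_bot']
      exact bot_le
    · rw [show s1 * t * (a * b) = (t * b) * (a * s1) by ring, mul_smul, hA,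
        Submodule.smul_bot']
  · rcases hs1 b (b • N) le_rfl with hB | hB
    · right; left
      constructor
      · exact main a b hA hK
      · rw [show s1 * t * (a * b) = (t * a) * (b * s1) by ring, mul_smul, hB,
          Submodule.smul_bot']
    · right; right
      exact ⟨main b a hB (by rwa [mul_comm]), main a b hA hK⟩

theorem stmt16 {R M : Type*} [CommRing R] [AddCommGroup M] [Module R M]
    (S : Set R) (hS : IsMCS S) (N1 N2 : Submodule R M)
    (h1 : IsSSecond S N1) (h2 : IsSSecond S N2) :
    IsS2AbsorbingSecond S (N1 ⊔ N2) := by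
  obtain ⟨hann1, s1, hs1S, hs1⟩ := h1
  obtain ⟨hann2, s2, hs2S, hs2⟩ := h2
  constructor
  · intro s hsS hmem
    exact hann1 s hsS (Submodule.annihilator_mono le_sup_left hmem)
  · refine ⟨s1 * s2, hS.2.2 s1 hs1S s2 hs2S, ?_⟩
    intro a b K hK
    rw [Submodule.smul_sup'] at hK
    have hK1 : (a * b) • N1 ≤ K := le_trans le_sup_left hK
    have hK2 : (a * b) • N2 ≤ K := le_trans le_sup_right hK
    have c1 := auxSSecond a b s1 s2 N1 K hs1 hK1
    have c2 := auxSSecond a b s2 s1 N2 K hs2 hK2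
    rw [mul_comm s2 s1] at c2
    have hsup : ∀ x : R, x • N1 ≤ K → x • N2 ≤ K → x • (N1 ⊔ N2) ≤ K := by
      intro x hx1 hx2
      rw [Submodule.smul_sup']
      exact sup_le hx1 hx2
    have hbot : ∀ x : R, x • N1 = ⊥ → x • N2 = ⊥ → x • (N1 ⊔ N2) = ⊥ := by
      intro x hx1 hx2
      rw [Submodule.smul_sup', hx1, hx2, sup_idem]
    rcases c1 with ⟨hA1, hC1⟩ | ⟨hB1, hC1⟩ | ⟨hA1, hB1⟩ <;>
      rcases c2 with ⟨hA2, hC2⟩ | ⟨hB2, hC2⟩ | ⟨hA2, hB2⟩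
    · exact Or.inl (hsup _ hA1 hA2)
    · exact Or.inr (Or.inr (hbot _ hC1 hC2))
    · exact Or.inl (hsup _ hA1 hA2)
    · exact Or.inr (Or.inr (hbot _ hC1 hC2))
    · exact Or.inr (Or.inl (hsup _ hB1 hB2))
    · exact Or.inr (Or.inl (hsup _ hB1 hB2))
    · exact Or.inl (hsup _ hA1 hA2)
    · exact Or.inr (Or.inl (hsup _ hB1 hB2))
    · exact Or.inl (hsup _ hA1 hA2)
end

section
/- Let R be a commutative ring, M an R-module, and I an ideal of R with I ⊆ Ann_R(M). Then I is a strongly 2-absorbing second ideal of R if and only if I(+)0 is a strongly 2-absorbing second ideal of the idealization ring R(+)M. -/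
open Pointwise

/-- A nonzero ideal `J` of a commutative ring `T` is strongly 2-absorbing second. -/
def IsStrongly2AbsorbingSecondIdeal {T : Type*} [CommRing T] (J : Ideal T) : Prop :=
  J ≠ ⊥ ∧ ∀ a b : T, ∀ K : Ideal T, (a * b) • J ≤ K →
    a • J ≤ K ∨ b • J ≤ K ∨ (a * b) • J = ⊥

lemma mem_psmul' {T : Type*} [CommRing T] (a x : T) (S : Ideal T) :
    x ∈ a • S ↔ ∃ y ∈ S, a * y = x := by
  rw [← SetLike.mem_coe, Submodule.coe_pointwise_smul, Set.mem_smul_set]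
  simp [smul_eq_mul]

lemma psmul_le' {T : Type*} [CommRing T] (a : T) (S K : Ideal T) :
    a • S ≤ K ↔ ∀ y ∈ S, a * y ∈ K := by
  constructor
  · intro h y hy
    exact h ((mem_psmul' a _ S).2 ⟨y, hy, rfl⟩)
  · intro h x hx
    obtain ⟨y, hy, rfl⟩ := (mem_psmul' a x S).1 hx
    exact h y hy

lemma psmul_eq_bot' {T : Type*} [CommRing T] (a : T) (S : Ideal T) :
    a • S = ⊥ ↔ ∀ y ∈ S, a * y = 0 := by
  rw [eq_bot_iff, psmul_le' a S ⊥]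
  simp [Ideal.mem_bot]

theorem stmt17 {R M : Type*} [CommRing R] [AddCommGroup M] [Module R M]
    [Module Rᵐᵒᵖ M] [IsCentralScalar R M]
    (I : Ideal R) (hIM : ∀ a ∈ I, ∀ m : M, a • m = 0)
    (J : Ideal (TrivSqZeroExt R M))
    (hJ : ∀ x : TrivSqZeroExt R M, x ∈ J ↔ x.fst ∈ I ∧ x.snd = 0) :
    IsStrongly2AbsorbingSecondIdeal I ↔ IsStrongly2AbsorbingSecondIdeal J := by
  have key : ∀ (z : TrivSqZeroExt R M), ∀ c ∈ I,
      z * TrivSqZeroExt.inl c = TrivSqZeroExt.inl (z.fst * c) := by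
    intro z c hc
    refine TrivSqZeroExt.ext (by simp) ?_
    simp [TrivSqZeroExt.snd_mul, op_smul_eq_smul, hIM c hc]
  have hinl : ∀ c ∈ I, (TrivSqZeroExt.inl c : TrivSqZeroExt R M) ∈ J := by
    intro c hc
    exact (hJ _).2 ⟨by simpa using hc, by simp⟩
  constructor
  · rintro ⟨hI0, hI⟩
    refine ⟨?_, ?_⟩
    · intro h
      apply hI0
      rw [eq_bot_iff]
      intro r hr
      have : (TrivSqZeroExt.inl r : TrivSqZeroExt R M) ∈ (⊥ : Ideal _) := h ▸ hinl r hr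
      rw [Ideal.mem_bot] at this
      simpa using congrArg TrivSqZeroExt.fst this
    · intro x y K hK
      set K' : Ideal R := Ideal.comap (TrivSqZeroExt.inlHom R M) K with hK'
      have hmemK' : ∀ r : R, r ∈ K' ↔ (TrivSqZeroExt.inl r : TrivSqZeroExt R M) ∈ K :=
        fun r => Iff.rfl
      have h1 : (x.fst * y.fst) • I ≤ K' := by
        rw [psmul_le']
        intro c hc
        have := (psmul_le' _ _ _).1 hK _ (hinl c hc)
        rwa [key (x * y) c hc, TrivSqZeroExt.fst_mul] at this
      rcases hI x.fst y.fst K' h1 with h | h | h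
      · left
        rw [psmul_le']
        intro z hz
        obtain ⟨hz1, hz2⟩ := (hJ z).1 hz
        have hz' : z = TrivSqZeroExt.inl z.fst := TrivSqZeroExt.ext rfl (by simp [hz2])
        rw [hz', key _ _ hz1]
        exact (hmemK' _).1 ((psmul_le' _ _ _).1 h _ hz1)
      · right; left
        rw [psmul_le']
        intro z hz
        obtain ⟨hz1, hz2⟩ := (hJ z).1 hz
        have hz' : z = TrivSqZeroExt.inl z.fst := TrivSqZeroExt.ext rfl (by simp [hz2])
        rw [hz', key _ _ hz1]
        exact (hmemK' _).1 ((psmul_le' _ _ _).1 h _ hz1)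
      · right; right
        rw [psmul_eq_bot']
        intro z hz
        obtain ⟨hz1, hz2⟩ := (hJ z).1 hz
        have hz' : z = TrivSqZeroExt.inl z.fst := TrivSqZeroExt.ext rfl (by simp [hz2])
        rw [hz', key _ _ hz1, TrivSqZeroExt.fst_mul]
        have := (psmul_eq_bot' _ _).1 h _ hz1
        simp [this]
  · rintro ⟨hJ0, hJ2⟩
    refine ⟨?_, ?_⟩
    · intro h
      apply hJ0
      rw [eq_bot_iff]
      intro z hz
      obtain ⟨hz1, hz2⟩ := (hJ z).1 hz
      rw [h, Ideal.mem_bot] at hz1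
      rw [Ideal.mem_bot]
      exact TrivSqZeroExt.ext hz1 hz2
    · intro a b K hK
      set K' : Ideal (TrivSqZeroExt R M) :=
        Ideal.comap ((TrivSqZeroExt.fstHom R R M).toRingHom) K with hK'
      have hmemK' : ∀ z : TrivSqZeroExt R M, z ∈ K' ↔ z.fst ∈ K := fun z => Iff.rfl
      have h1 : ((TrivSqZeroExt.inl a : TrivSqZeroExt R M) * TrivSqZeroExt.inl b) • J ≤ K' := by
        rw [psmul_le']
        intro z hz
        obtain ⟨hz1, hz2⟩ := (hJ z).1 hz
        rw [hmemK', TrivSqZeroExt.fst_mul, TrivSqZeroExt.fst_mul]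
        simp only [TrivSqZeroExt.fst_inl]
        exact (psmul_le' _ _ _).1 hK _ hz1
      rcases hJ2 _ _ K' h1 with h | h | h
      · left
        rw [psmul_le']
        intro c hc
        have := (psmul_le' _ _ _).1 h _ (hinl c hc)
        rwa [hmemK', TrivSqZeroExt.fst_mul, TrivSqZeroExt.fst_inl, TrivSqZeroExt.fst_inl] at this
      · right; left
        rw [psmul_le']
        intro c hc
        have := (psmul_le' _ _ _).1 h _ (hinl c hc)
        rwa [hmemK', TrivSqZeroExt.fst_mul, TrivSqZeroExt.fst_inl, TrivSqZeroExt.fst_inl] at this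
      · right; right
        rw [psmul_eq_bot']
        intro c hc
        have := (psmul_eq_bot' _ _).1 h _ (hinl c hc)
        have := congrArg TrivSqZeroExt.fst this
        simpa using this
end

section
/- Let R = R₁ × R₂, S = S₁ × S₂ with Sᵢ multiplicatively closed in Rᵢ, M = M₁ × M₂ with Mᵢ an Rᵢ-module, and N = N₁ × N₂ a submodule. Then N is an S-2-absorbing second submodule of M if and only if either (i) Ann_{R₁}(N₁) ∩ S₁ ≠ ∅ and N₂ is an S₂-2-absorbing second submodule of M₂, or (ii) Ann_{R₂}(N₂) ∩ S₂ ≠ ∅ and N₁ is an S₁-2-absorbing second submodule of M₁, or (iii) N₁ is an S₁-second submodule of M₁ and N₂ is an S₂-second submodule of M₂. -/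
open Pointwise

/-- The componentwise action of `R₁ × R₂` on `M₁` (through the first projection). -/
instance prodModuleLeft {R1 R2 M1 : Type*} [CommRing R1] [CommRing R2]
    [AddCommGroup M1] [Module R1 M1] : Module (R1 × R2) M1 :=
  Module.compHom M1 (RingHom.fst R1 R2)

/-- The componentwise action of `R₁ × R₂` on `M₂` (through the second projection). -/
instance prodModuleRight {R1 R2 M2 : Type*} [CommRing R1] [CommRing R2]
    [AddCommGroup M2] [Module R2 M2] : Module (R1 × R2) M2 :=
  Module.compHom M2 (RingHom.snd R1 R2)

instance prodSMulCommLeft {R1 R2 M1 : Type*} [CommRing R1] [CommRing R2]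
    [AddCommGroup M1] [Module R1 M1] :
    SMulCommClass (R1 × R2) (R1 × R2) M1 :=
  ⟨fun r s m => smul_comm r.1 s.1 m⟩

instance prodSMulCommRight {R1 R2 M2 : Type*} [CommRing R1] [CommRing R2]
    [AddCommGroup M2] [Module R2 M2] :
    SMulCommClass (R1 × R2) (R1 × R2) M2 :=
  ⟨fun r s m => smul_comm r.2 s.2 m⟩

/-- The product `N₁ × N₂` of submodules, as a submodule of the `R₁ × R₂`-module `M₁ × M₂`. -/
def Submodule.prodProd {R1 R2 M1 M2 : Type*} [CommRing R1] [CommRing R2]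
    [AddCommGroup M1] [Module R1 M1] [AddCommGroup M2] [Module R2 M2]
    (N1 : Submodule R1 M1) (N2 : Submodule R2 M2) :
    Submodule (R1 × R2) (M1 × M2) where
  carrier := {x | x.1 ∈ N1 ∧ x.2 ∈ N2}
  add_mem' hx hy := ⟨N1.add_mem hx.1 hy.1, N2.add_mem hx.2 hy.2⟩
  zero_mem' := ⟨N1.zero_mem, N2.zero_mem⟩
  smul_mem' r x hx := ⟨N1.smul_mem r.1 hx.1, N2.smul_mem r.2 hx.2⟩


/-!
Submodules of `M₁ × M₂` over `R₁ × R₂` are products `K₁ × K₂`, and `r • (N₁ × N₂) = r₁ N₁ × r₂ N₂`,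
so the `S`-2-absorbing second condition for `N₁ × N₂` becomes a pair of componentwise conditions
in which the same alternative has to hold in both factors. If some element of `S₁` annihilates
`N₁`, the first factor satisfies every alternative and the condition is that of `N₂`. Otherwise
testing with `(r, 1) * (1, 0)` against `K × 0` shows that `N₁` is `S₁`-second, and symmetrically.
Conversely, an `S`-second submodule always satisfies at least two of the three alternatives, so
for two `S`-second factors some alternative holds in both.
-/

namespace Submodule

section SMul

variable {R M : Type*} [CommRing R] [AddCommGroup M] [Module R M]

theorem pointwise_smul_le_iff (r : R) (N K : Submodule R M) :
    r • N ≤ K ↔ ∀ n ∈ N, r • n ∈ K :=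
  Set.smul_set_subset_iff

theorem pointwise_smul_le_of_mem_annihilator {r : R} {N : Submodule R M}
    (hr : r ∈ N.annihilator) (K : Submodule R M) : r • N ≤ K :=
  ((pointwise_smul_eq_bot_iff r N).2 hr).trans_le bot_le

end SMul

section Prod

variable {R1 R2 M1 M2 : Type*} [CommRing R1] [CommRing R2]
    [AddCommGroup M1] [Module R1 M1] [AddCommGroup M2] [Module R2 M2]

@[simp]
theorem prodModuleLeft_smul (r : R1 × R2) (x : M1) : r • x = r.1 • x := rfl

@[simp]
theorem prodModuleRight_smul (r : R1 × R2) (y : M2) : r • y = r.2 • y := rfl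

@[simp]
theorem mem_prodProd {N1 : Submodule R1 M1} {N2 : Submodule R2 M2} {x : M1 × M2} :
    x ∈ N1.prodProd N2 ↔ x.1 ∈ N1 ∧ x.2 ∈ N2 := Iff.rfl

def fstComponent (K : Submodule (R1 × R2) (M1 × M2)) : Submodule R1 M1 where
  carrier := {x | (x, 0) ∈ K}
  add_mem' hx hy := by simpa using K.add_mem hx hy
  zero_mem' := K.zero_mem
  smul_mem' r x hx := by simpa using K.smul_mem (r, 0) hx

def sndComponent (K : Submodule (R1 × R2) (M1 × M2)) : Submodule R2 M2 where
  carrier := {y | (0, y) ∈ K}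
  add_mem' hx hy := by simpa using K.add_mem hx hy
  zero_mem' := K.zero_mem
  smul_mem' r y hy := by simpa using K.smul_mem (0, r) hy

@[simp]
theorem mem_fstComponent {K : Submodule (R1 × R2) (M1 × M2)} {x : M1} :
    x ∈ K.fstComponent ↔ (x, 0) ∈ K := Iff.rfl

@[simp]
theorem mem_sndComponent {K : Submodule (R1 × R2) (M1 × M2)} {y : M2} :
    y ∈ K.sndComponent ↔ (0, y) ∈ K := Iff.rfl

/-- The idempotents `(1, 0)` and `(0, 1)` split every submodule of `M₁ × M₂`. -/
theorem prodProd_fstComponent_sndComponent (K : Submodule (R1 × R2) (M1 × M2)) :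
    K.fstComponent.prodProd K.sndComponent = K := by
  ext x
  refine ⟨fun hx => by simpa using K.add_mem hx.1 hx.2, fun hx => ⟨?_, ?_⟩⟩
  · simpa [Prod.smul_def] using K.smul_mem (1, 0) hx
  · simpa [Prod.smul_def] using K.smul_mem (0, 1) hx

theorem forall_prodProd {P : Submodule (R1 × R2) (M1 × M2) → Prop} :
    (∀ K, P K) ↔ ∀ (K1 : Submodule R1 M1) (K2 : Submodule R2 M2), P (K1.prodProd K2) :=
  ⟨fun h _ _ => h _, fun h K => prodProd_fstComponent_sndComponent K ▸ h _ _⟩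

theorem pointwise_smul_prodProd (r : R1 × R2) (N1 : Submodule R1 M1) (N2 : Submodule R2 M2) :
    r • N1.prodProd N2 = (r.1 • N1).prodProd (r.2 • N2) := by
  ext x
  simp only [mem_prodProd, mem_smul_pointwise_iff_exists]
  constructor
  · rintro ⟨n, hn, rfl⟩
    exact ⟨⟨n.1, hn.1, rfl⟩, ⟨n.2, hn.2, rfl⟩⟩
  · rintro ⟨⟨n1, hn1, h1⟩, ⟨n2, hn2, h2⟩⟩
    exact ⟨(n1, n2), ⟨hn1, hn2⟩, Prod.ext h1 h2⟩

theorem prodProd_le_prodProd_iff {A1 B1 : Submodule R1 M1} {A2 B2 : Submodule R2 M2} :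
    A1.prodProd A2 ≤ B1.prodProd B2 ↔ A1 ≤ B1 ∧ A2 ≤ B2 := by
  refine ⟨fun h => ⟨fun x hx => ?_, fun y hy => ?_⟩, fun h x hx => ⟨h.1 hx.1, h.2 hx.2⟩⟩
  · exact (@h (x, 0) ⟨hx, A2.zero_mem⟩).1
  · exact (@h (0, y) ⟨A1.zero_mem, hy⟩).2

theorem prodProd_bot : (⊥ : Submodule R1 M1).prodProd (⊥ : Submodule R2 M2) = ⊥ := by
  ext x
  simp [Prod.ext_iff]

theorem prodProd_eq_bot_iff {N1 : Submodule R1 M1} {N2 : Submodule R2 M2} :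
    N1.prodProd N2 = ⊥ ↔ N1 = ⊥ ∧ N2 = ⊥ := by
  rw [← le_bot_iff, ← prodProd_bot, prodProd_le_prodProd_iff, le_bot_iff, le_bot_iff]

theorem mem_annihilator_prodProd {r : R1 × R2} {N1 : Submodule R1 M1} {N2 : Submodule R2 M2} :
    r ∈ (N1.prodProd N2).annihilator ↔ r.1 ∈ N1.annihilator ∧ r.2 ∈ N2.annihilator := by
  simp only [← pointwise_smul_eq_bot_iff, pointwise_smul_prodProd, prodProd_eq_bot_iff]

end Prod

end Submodule

open Submodule

section Component

variable {R M : Type*} [CommRing R] [AddCommGroup M] [Module R M] {S : Set R}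
    {N : Submodule R M}

theorem IsSSecond.exists_two_of_three (h : IsSSecond S N) :
    ∃ s ∈ S, ∀ a b : R, ∀ K : Submodule R M, (a * b) • N ≤ K →
      ((s * a) • N ≤ K ∧ (s * b) • N ≤ K) ∨
      ((s * a) • N ≤ K ∧ s * (a * b) ∈ N.annihilator) ∨
      ((s * b) • N ≤ K ∧ s * (a * b) ∈ N.annihilator) := by
  obtain ⟨-, s, hs, hsecond⟩ := h
  refine ⟨s, hs, fun a b K hab => ?_⟩
  -- Apply the `S`-second condition with `K` replaced by its preimage under `y • ·`.
  have key : ∀ x y : R, (x * y) • N ≤ K →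
      ((s * x) • N ≤ K ∧ s * (x * y) ∈ N.annihilator) ∨ (s * y) • N ≤ K := by
    intro x y hxy
    rw [mul_comm, mul_smul, pointwise_smul_def, map_le_iff_le_comap] at hxy
    rcases hsecond x _ hxy with hxs | hsy
    · rw [pointwise_smul_eq_bot_iff] at hxs
      refine Or.inl ⟨pointwise_smul_le_of_mem_annihilator ?_ K, ?_⟩
      · rwa [mul_comm]
      · convert Ideal.mul_mem_right y _ hxs using 1
        ring
    · rw [← map_le_iff_le_comap, ← pointwise_smul_def, ← mul_smul, mul_comm] at hsy
      exact Or.inr hsy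
  have hab' := key a b hab
  have hba := key b a (by rwa [mul_comm])
  rw [mul_comm b a] at hba
  tauto

end Component

section Product

variable {R1 R2 M1 M2 : Type*} [CommRing R1] [CommRing R2]
    [AddCommGroup M1] [Module R1 M1] [AddCommGroup M2] [Module R2 M2]
    {S1 : Set R1} {S2 : Set R2} {N1 : Submodule R1 M1} {N2 : Submodule R2 M2}

theorem isS2AbsorbingSecond_prodProd_iff :
    IsS2AbsorbingSecond (S1 ×ˢ S2) (N1.prodProd N2) ↔
      (∀ s ∈ S1 ×ˢ S2, ¬(s.1 ∈ N1.annihilator ∧ s.2 ∈ N2.annihilator)) ∧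
      ∃ s ∈ S1 ×ˢ S2, ∀ a b : R1 × R2, ∀ (K1 : Submodule R1 M1) (K2 : Submodule R2 M2),
        (a.1 * b.1) • N1 ≤ K1 → (a.2 * b.2) • N2 ≤ K2 →
          ((s.1 * a.1) • N1 ≤ K1 ∧ (s.2 * a.2) • N2 ≤ K2) ∨
          ((s.1 * b.1) • N1 ≤ K1 ∧ (s.2 * b.2) • N2 ≤ K2) ∨
          (s.1 * (a.1 * b.1) ∈ N1.annihilator ∧ s.2 * (a.2 * b.2) ∈ N2.annihilator) := by
  simp only [IsS2AbsorbingSecond, forall_prodProd, mem_annihilator_prodProd,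
    pointwise_smul_prodProd, prodProd_le_prodProd_iff, prodProd_eq_bot_iff,
    pointwise_smul_eq_bot_iff, Prod.fst_mul, Prod.snd_mul, and_imp]

theorem IsS2AbsorbingSecond.snd_of_prodProd (h : IsS2AbsorbingSecond (S1 ×ˢ S2) (N1.prodProd N2))
    (hN1 : ∃ t ∈ S1, t ∈ N1.annihilator) : IsS2AbsorbingSecond S2 N2 := by
  obtain ⟨hann, s, hs, habs⟩ := isS2AbsorbingSecond_prodProd_iff.1 h
  obtain ⟨t, ht, htN⟩ := hN1
  refine ⟨fun u hu huN => hann (t, u) ⟨ht, hu⟩ ⟨htN, huN⟩, s.2, hs.2, fun a b K hab => ?_⟩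
  rw [pointwise_smul_eq_bot_iff]
  exact (habs (1, a) (1, b) ⊤ K le_top hab).imp And.right (Or.imp And.right And.right)

theorem IsS2AbsorbingSecond.fst_of_prodProd (h : IsS2AbsorbingSecond (S1 ×ˢ S2) (N1.prodProd N2))
    (hN2 : ∃ t ∈ S2, t ∈ N2.annihilator) : IsS2AbsorbingSecond S1 N1 := by
  obtain ⟨hann, s, hs, habs⟩ := isS2AbsorbingSecond_prodProd_iff.1 h
  obtain ⟨t, ht, htN⟩ := hN2
  refine ⟨fun u hu huN => hann (u, t) ⟨hu, ht⟩ ⟨huN, htN⟩, s.1, hs.1, fun a b K hab => ?_⟩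
  rw [pointwise_smul_eq_bot_iff]
  exact (habs (a, 1) (b, 1) K ⊤ hab le_top).imp And.left (Or.imp And.left And.left)

/-- Test the condition on `(r, 1) * (1, 0) = (r, 0)` against `K × 0`. -/
theorem IsS2AbsorbingSecond.isSSecond_fst_of_prodProd
    (h : IsS2AbsorbingSecond (S1 ×ˢ S2) (N1.prodProd N2))
    (hN1 : ∀ t ∈ S1, t ∉ N1.annihilator) (hN2 : ∀ t ∈ S2, t ∉ N2.annihilator) :
    IsSSecond S1 N1 := by
  obtain ⟨-, s, hs, habs⟩ := isS2AbsorbingSecond_prodProd_iff.1 h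
  refine ⟨hN1, s.1, hs.1, fun r K hr => ?_⟩
  rcases habs (r, 1) (1, 0) K ⊥ (by simpa using hr) (by simp) with h | h | h
  · refine absurd ?_ (hN2 s.2 hs.2)
    rw [← pointwise_smul_eq_bot_iff, ← le_bot_iff]
    simpa using h.2
  · exact Or.inr (by simpa using h.1)
  · rw [pointwise_smul_eq_bot_iff, mul_comm]
    exact Or.inl (by simpa using h.1)

theorem IsS2AbsorbingSecond.isSSecond_snd_of_prodProd
    (h : IsS2AbsorbingSecond (S1 ×ˢ S2) (N1.prodProd N2))
    (hN1 : ∀ t ∈ S1, t ∉ N1.annihilator) (hN2 : ∀ t ∈ S2, t ∉ N2.annihilator) :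
    IsSSecond S2 N2 := by
  obtain ⟨-, s, hs, habs⟩ := isS2AbsorbingSecond_prodProd_iff.1 h
  refine ⟨hN2, s.2, hs.2, fun r K hr => ?_⟩
  rcases habs (1, r) (0, 1) ⊥ K (by simp) (by simpa using hr) with h | h | h
  · refine absurd ?_ (hN1 s.1 hs.1)
    rw [← pointwise_smul_eq_bot_iff, ← le_bot_iff]
    simpa using h.1
  · exact Or.inr (by simpa using h.2)
  · rw [pointwise_smul_eq_bot_iff, mul_comm]
    exact Or.inl (by simpa using h.2)

theorem IsS2AbsorbingSecond.prodProd_of_exists_mem_annihilator_fst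
    (hN1 : ∃ t ∈ S1, t ∈ N1.annihilator) (h2 : IsS2AbsorbingSecond S2 N2) :
    IsS2AbsorbingSecond (S1 ×ˢ S2) (N1.prodProd N2) := by
  obtain ⟨t, ht, htN⟩ := hN1
  obtain ⟨hN2, s, hs, habs⟩ := h2
  refine isS2AbsorbingSecond_prodProd_iff.2
    ⟨fun u hu huN => hN2 u.2 hu.2 huN.2, (t, s), ⟨ht, hs⟩, fun a b K1 K2 _ hab => ?_⟩
  have htK (x : R1) : (t * x) • N1 ≤ K1 :=
    pointwise_smul_le_of_mem_annihilator (Ideal.mul_mem_right x _ htN) K1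
  rcases habs a.2 b.2 K2 hab with h | h | h
  · exact Or.inl ⟨htK _, h⟩
  · exact Or.inr (Or.inl ⟨htK _, h⟩)
  · exact Or.inr (Or.inr ⟨Ideal.mul_mem_right _ _ htN, (pointwise_smul_eq_bot_iff _ _).1 h⟩)

theorem IsS2AbsorbingSecond.prodProd_of_exists_mem_annihilator_snd
    (hN2 : ∃ t ∈ S2, t ∈ N2.annihilator) (h1 : IsS2AbsorbingSecond S1 N1) :
    IsS2AbsorbingSecond (S1 ×ˢ S2) (N1.prodProd N2) := by
  obtain ⟨t, ht, htN⟩ := hN2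
  obtain ⟨hN1, s, hs, habs⟩ := h1
  refine isS2AbsorbingSecond_prodProd_iff.2
    ⟨fun u hu huN => hN1 u.1 hu.1 huN.1, (s, t), ⟨hs, ht⟩, fun a b K1 K2 hab _ => ?_⟩
  have htK (x : R2) : (t * x) • N2 ≤ K2 :=
    pointwise_smul_le_of_mem_annihilator (Ideal.mul_mem_right x _ htN) K2
  rcases habs a.1 b.1 K1 hab with h | h | h
  · exact Or.inl ⟨h, htK _⟩
  · exact Or.inr (Or.inl ⟨h, htK _⟩)
  · exact Or.inr (Or.inr ⟨(pointwise_smul_eq_bot_iff _ _).1 h, Ideal.mul_mem_right _ _ htN⟩)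

theorem IsSSecond.prodProd (h1 : IsSSecond S1 N1) (h2 : IsSSecond S2 N2) :
    IsS2AbsorbingSecond (S1 ×ˢ S2) (N1.prodProd N2) := by
  obtain ⟨s1, hs1, habs1⟩ := h1.exists_two_of_three
  obtain ⟨s2, hs2, habs2⟩ := h2.exists_two_of_three
  refine isS2AbsorbingSecond_prodProd_iff.2
    ⟨fun u hu huN => h1.1 u.1 hu.1 huN.1, (s1, s2), ⟨hs1, hs2⟩, fun a b K1 K2 hab1 hab2 => ?_⟩
  -- Two of the three alternatives hold in each factor, so one of them holds in both.
  have := habs1 a.1 b.1 K1 hab1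
  have := habs2 a.2 b.2 K2 hab2
  tauto

end Product

theorem stmt18_general {R1 R2 M1 M2 : Type*} [CommRing R1] [CommRing R2]
    [AddCommGroup M1] [Module R1 M1] [AddCommGroup M2] [Module R2 M2]
    (S1 : Set R1) (S2 : Set R2)
    (N1 : Submodule R1 M1) (N2 : Submodule R2 M2) :
    IsS2AbsorbingSecond (S1 ×ˢ S2) (N1.prodProd N2) ↔
      ((∃ s ∈ S1, s ∈ N1.annihilator) ∧ IsS2AbsorbingSecond S2 N2) ∨
      ((∃ s ∈ S2, s ∈ N2.annihilator) ∧ IsS2AbsorbingSecond S1 N1) ∨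
      (IsSSecond S1 N1 ∧ IsSSecond S2 N2) := by
  constructor
  · intro h
    by_cases hN1 : ∃ t ∈ S1, t ∈ N1.annihilator
    · exact Or.inl ⟨hN1, h.snd_of_prodProd hN1⟩
    by_cases hN2 : ∃ t ∈ S2, t ∈ N2.annihilator
    · exact Or.inr (Or.inl ⟨hN2, h.fst_of_prodProd hN2⟩)
    push Not at hN1 hN2
    exact Or.inr (Or.inr
      ⟨h.isSSecond_fst_of_prodProd hN1 hN2, h.isSSecond_snd_of_prodProd hN1 hN2⟩)
  · rintro (⟨hN1, h2⟩ | ⟨hN2, h1⟩ | ⟨h1, h2⟩)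
    · exact h2.prodProd_of_exists_mem_annihilator_fst hN1
    · exact h1.prodProd_of_exists_mem_annihilator_snd hN2
    · exact h1.prodProd h2

theorem stmt18 {R1 R2 M1 M2 : Type*} [CommRing R1] [CommRing R2]
    [AddCommGroup M1] [Module R1 M1] [AddCommGroup M2] [Module R2 M2]
    (S1 : Set R1) (S2 : Set R2) (hS1 : IsMCS S1) (hS2 : IsMCS S2)
    (N1 : Submodule R1 M1) (N2 : Submodule R2 M2) :
    IsS2AbsorbingSecond (S1 ×ˢ S2) (N1.prodProd N2) ↔
      ((∃ s ∈ S1, s ∈ N1.annihilator) ∧ IsS2AbsorbingSecond S2 N2) ∨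
      ((∃ s ∈ S2, s ∈ N2.annihilator) ∧ IsS2AbsorbingSecond S1 N1) ∨
      (IsSSecond S1 N1 ∧ IsSSecond S2 N2) :=
  stmt18_general S1 S2 N1 N2
end
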